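/- arXiv:1408.6261 — 5 statements merged into one kernel-verified Lean document; each statement's English description precedes it below -/
import Mathlib

section
/- Let a, τ > 0 with τ ≤ a, let λ_k > 0, and let λ = x + iy be a complex number satisfying e^{-λτ} + λ²/λ_k + aλ = 0. Then x = Re(λ) < 0. -/
/-!
Multiply the equation by `λ_k` and write `λ = x + iy` with `x ≥ 0`. The imaginary part gives
`y (2x + aλ_k) = λ_k e^{-τx} sin(τy)`; since `e^{-τx} ≤ 1` and `|sin(τy)| < τ|y| ≤ a|y|` for `y ≠ 0`,
this forces `y = 0`. The real part then reads `λ_k e^{-τx} + x² + aλ_k x = 0`, whose left side is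
positive.
-/

namespace DelayedWave

open Complex

variable {a τ lamk : ℝ} {lam : ℂ}

lemma charEq_mul_lamk (hk : lamk ≠ 0) (heq : exp (-lam * τ) + lam ^ 2 / lamk + a * lam = 0) :
    lamk * exp (-(lam * τ)) + lam ^ 2 + a * lamk * lam = 0 := by
  have hk' : (lamk : ℂ) ≠ 0 := by exact_mod_cast hk
  field_simp at heq
  linear_combination heq

lemma charEq_re (hk : lamk ≠ 0) (heq : exp (-lam * τ) + lam ^ 2 / lamk + a * lam = 0) :
    lamk * (Real.exp (-(lam.re * τ)) * Real.cos (lam.im * τ)) + lam.re ^ 2 - lam.im ^ 2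
      + a * lamk * lam.re = 0 := by
  have h := congrArg re (charEq_mul_lamk hk heq)
  simp only [add_re, mul_re, exp_re, exp_im, neg_re, neg_im, ofReal_re, ofReal_im, pow_two,
    zero_re] at h
  simpa [Real.cos_neg, pow_two, sub_eq_add_neg, add_assoc] using h

lemma charEq_im (hk : lamk ≠ 0) (heq : exp (-lam * τ) + lam ^ 2 / lamk + a * lam = 0) :
    lam.im * (2 * lam.re + a * lamk) =
      lamk * (Real.exp (-(lam.re * τ)) * Real.sin (lam.im * τ)) := by
  have h := congrArg im (charEq_mul_lamk hk heq)
  simp only [add_im, mul_im, mul_re, exp_re, exp_im, neg_re, neg_im, ofReal_re, ofReal_im, pow_two,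
    zero_im, mul_zero, sub_zero, zero_mul, add_zero, zero_add, Real.sin_neg] at h
  linear_combination h

lemma im_eq_zero_of_re_nonneg (hk : 0 < lamk) (hτ : 0 < τ) (hτa : τ ≤ a)
    (heq : exp (-lam * τ) + lam ^ 2 / lamk + a * lam = 0) (hx : 0 ≤ lam.re) : lam.im = 0 := by
  by_contra hy
  have hexp : Real.exp (-(lam.re * τ)) ≤ 1 := Real.exp_le_one_iff.mpr (by nlinarith)
  have hsin : |Real.sin (lam.im * τ)| < |lam.im| * τ := by
    simpa [abs_mul, abs_of_pos hτ] using Real.abs_sin_lt_abs (mul_ne_zero hy hτ.ne')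
  have key : |lam.im| * (2 * lam.re + a * lamk) < |lam.im| * (a * lamk) :=
    calc |lam.im| * (2 * lam.re + a * lamk)
        ≤ |lam.im * (2 * lam.re + a * lamk)| := by
          rw [abs_mul]; exact mul_le_mul_of_nonneg_left (le_abs_self _) (abs_nonneg _)
      _ = lamk * (Real.exp (-(lam.re * τ)) * |Real.sin (lam.im * τ)|) := by
          rw [charEq_im hk.ne' heq, abs_mul, abs_mul, abs_of_pos hk, abs_of_pos (Real.exp_pos _)]
      _ ≤ lamk * |Real.sin (lam.im * τ)| := by
          gcongr; exact mul_le_of_le_one_left (abs_nonneg _) hexp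
      _ < lamk * (|lam.im| * τ) := by gcongr
      _ ≤ lamk * (|lam.im| * a) := by gcongr
      _ = |lam.im| * (a * lamk) := by ring
  nlinarith [abs_nonneg lam.im]

end DelayedWave

theorem stmt_0 (a τ lamk : ℝ) (ha : 0 < a) (hτ : 0 < τ) (hτa : τ ≤ a)
    (hk : 0 < lamk) (lam : ℂ)
    (heq : Complex.exp (-lam * τ) + lam ^ 2 / lamk + a * lam = 0) :
    lam.re < 0 := by
  by_contra! hx
  have hy := DelayedWave.im_eq_zero_of_re_nonneg hk hτ hτa heq hx
  have hre := DelayedWave.charEq_re hk.ne' heq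
  rw [hy, zero_mul, Real.cos_zero, mul_one] at hre
  nlinarith [mul_pos hk (Real.exp_pos (-(lam.re * τ))), mul_nonneg (mul_nonneg ha.le hk.le) hx]
end

section
/- Let a, τ, λ_k > 0 and x, y real numbers with x ≥ 0 and y ≠ 0 satisfying -e^{-τx} sin(τy) + 2xy/λ_k + ay = 0. Then 2x/λ_k + a ≤ τ. -/
open Real

lemma abs_exp_neg_mul_mul_sin_le {τ x : ℝ} (hτx : 0 ≤ τ * x) (y : ℝ) :
    |exp (-τ * x) * sin (τ * y)| ≤ |τ * y| :=
  calc |exp (-τ * x) * sin (τ * y)| = exp (-τ * x) * |sin (τ * y)| := by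
        rw [abs_mul, abs_of_pos (exp_pos _)]
    _ ≤ 1 * |sin (τ * y)| := by
        gcongr
        exact exp_le_one_iff.2 (by linarith)
    _ ≤ |τ * y| := by rw [one_mul]; exact abs_sin_le_abs

lemma le_of_mul_eq_exp_neg_mul_mul_sin {c τ x y : ℝ} (hτ : 0 ≤ τ) (hx : 0 ≤ x) (hy : y ≠ 0)
    (h : c * y = exp (-τ * x) * sin (τ * y)) : c ≤ τ := by
  have habs : |c| * |y| ≤ τ * |y| := by
    calc |c| * |y| = |exp (-τ * x) * sin (τ * y)| := by rw [← abs_mul, h]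
      _ ≤ |τ * y| := abs_exp_neg_mul_mul_sin_le (mul_nonneg hτ hx) y
      _ = τ * |y| := by rw [abs_mul, abs_of_nonneg hτ]
  exact (le_abs_self c).trans (le_of_mul_le_mul_right habs (abs_pos.2 hy))

theorem stmt_1_general (a τ lamk x y : ℝ) (hτ : 0 < τ)
    (hx : 0 ≤ x) (hy : y ≠ 0)
    (heq : -Real.exp (-τ * x) * Real.sin (τ * y) + 2 * x * y / lamk + a * y = 0) :
    2 * x / lamk + a ≤ τ := by
  refine le_of_mul_eq_exp_neg_mul_mul_sin hτ.le hx hy ?_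
  rw [add_mul, div_mul_eq_mul_div]
  linarith

theorem stmt_1 (a τ lamk x y : ℝ) (ha : 0 < a) (hτ : 0 < τ) (hk : 0 < lamk)
    (hx : 0 ≤ x) (hy : y ≠ 0)
    (heq : -Real.exp (-τ * x) * Real.sin (τ * y) + 2 * x * y / lamk + a * y = 0) :
    2 * x / lamk + a ≤ τ :=
  stmt_1_general a τ lamk x y hτ hx hy heq
end

section
/- Let a, τ, λ_k > 0 with τ ≤ a. If x ≥ 0 and y ≠ 0 satisfy -e^{-τx} sin(τy) + 2xy/λ_k + ay = 0, then τ = a, x = 0, and sin(τy) = τy; but sin(τy) = τy with y ≠ 0 is impossible, hence no such (x, y) exists. -/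
/-! Rewrite the equation as `e^{-τx} sin(τy) = (2x/λ + a) y`. For `x ≥ 0` and `y ≠ 0` the left side
has modulus `< τ|y|`, since `e^{-τx} ≤ 1` and `|sin t| < |t|` for `t ≠ 0`, while the right side has
modulus `≥ a|y| ≥ τ|y|`. So the equation has no solution, and the first conjunct holds vacuously. -/

open Real

lemma abs_exp_mul_sin_lt {τ x y : ℝ} (hτ : 0 < τ) (hx : 0 ≤ x) (hy : y ≠ 0) :
    |exp (-τ * x) * sin (τ * y)| < τ * |y| := by
  have hexp : exp (-τ * x) ≤ 1 := exp_le_one_iff.mpr (by nlinarith)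
  calc |exp (-τ * x) * sin (τ * y)| = exp (-τ * x) * |sin (τ * y)| := by
        rw [abs_mul, abs_of_pos (exp_pos _)]
    _ ≤ |sin (τ * y)| := mul_le_of_le_one_left (abs_nonneg _) hexp
    _ < |τ * y| := abs_sin_lt_abs (mul_ne_zero hτ.ne' hy)
    _ = τ * |y| := by rw [abs_mul, abs_of_pos hτ]

lemma mul_abs_le_abs_mul_add {a c : ℝ} (ha : 0 ≤ a) (hc : 0 ≤ c) (y : ℝ) :
    a * |y| ≤ |c * y + a * y| := by
  rw [← add_mul, abs_mul, abs_of_nonneg (add_nonneg hc ha)]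
  exact mul_le_mul_of_nonneg_right (le_add_of_nonneg_left hc) (abs_nonneg y)

lemma characteristic_eq_ne_zero {a τ lamk x y : ℝ} (hτ : 0 < τ) (hk : 0 < lamk) (hτa : τ ≤ a)
    (hx : 0 ≤ x) (hy : y ≠ 0) :
    -exp (-τ * x) * sin (τ * y) + 2 * x * y / lamk + a * y ≠ 0 := by
  intro heq
  have hsplit : exp (-τ * x) * sin (τ * y) = (2 * x / lamk) * y + a * y := by
    rw [div_mul_eq_mul_div]; linarith
  have hlt := abs_exp_mul_sin_lt hτ hx hy
  have hge := mul_abs_le_abs_mul_add (hτ.le.trans hτa) (by positivity : 0 ≤ 2 * x / lamk) y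
  rw [← hsplit] at hge
  linarith [mul_le_mul_of_nonneg_right hτa (abs_nonneg y)]

theorem stmt_2_general (a τ lamk : ℝ) (hτ : 0 < τ) (hk : 0 < lamk)
    (hτa : τ ≤ a) :
    (∀ x y : ℝ, 0 ≤ x → y ≠ 0 →
      -Real.exp (-τ * x) * Real.sin (τ * y) + 2 * x * y / lamk + a * y = 0 →
      τ = a ∧ x = 0 ∧ Real.sin (τ * y) = τ * y) ∧
    ¬ ∃ x y : ℝ, 0 ≤ x ∧ y ≠ 0 ∧
      -Real.exp (-τ * x) * Real.sin (τ * y) + 2 * x * y / lamk + a * y = 0 :=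
  ⟨fun _ _ hx hy heq => absurd heq (characteristic_eq_ne_zero hτ hk hτa hx hy),
    fun ⟨_, _, hx, hy, heq⟩ => characteristic_eq_ne_zero hτ hk hτa hx hy heq⟩

theorem stmt_2 (a τ lamk : ℝ) (ha : 0 < a) (hτ : 0 < τ) (hk : 0 < lamk)
    (hτa : τ ≤ a) :
    (∀ x y : ℝ, 0 ≤ x → y ≠ 0 →
      -Real.exp (-τ * x) * Real.sin (τ * y) + 2 * x * y / lamk + a * y = 0 →
      τ = a ∧ x = 0 ∧ Real.sin (τ * y) = τ * y) ∧
    ¬ ∃ x y : ℝ, 0 ≤ x ∧ y ≠ 0 ∧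
      -Real.exp (-τ * x) * Real.sin (τ * y) + 2 * x * y / lamk + a * y = 0 :=
  stmt_2_general a τ lamk hτ hk hτa
end

section
/- Let a, τ > 0 with τ ≤ a, and suppose x, y are real with e^{-τx} cos(τy) + ax = 0 and ay - e^{-τx} sin(τy) = 0. Then x < 0. -/
/-! If `x ≥ 0`, then `|e^{-λτ}| ≤ 1`, so `|aλ| ≤ 1` and hence `|τy| ≤ |ay| ≤ 1 < π/2`, forcing
`cos (τy) > 0`. But the real part of the equation gives `e^{-τx} cos (τy) = -ax ≤ 0`. -/

open Real

theorem sq_add_sq_eq_exp_sq_of_char_eq {a τ x y : ℝ}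
    (h1 : exp (-τ * x) * cos (τ * y) + a * x = 0)
    (h2 : a * y - exp (-τ * x) * sin (τ * y) = 0) :
    (a * x) ^ 2 + (a * y) ^ 2 = exp (-τ * x) ^ 2 := by
  rw [show a * x = -(exp (-τ * x) * cos (τ * y)) by linarith,
    show a * y = exp (-τ * x) * sin (τ * y) by linarith]
  linear_combination exp (-τ * x) ^ 2 * sin_sq_add_cos_sq (τ * y)

theorem stmt_8_general (a τ x y : ℝ) (hτ : 0 < τ) (hτa : τ ≤ a)
    (h1 : Real.exp (-τ * x) * Real.cos (τ * y) + a * x = 0)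
    (h2 : a * y - Real.exp (-τ * x) * Real.sin (τ * y) = 0) :
    x < 0 := by
  by_contra! hx
  have ha : 0 < a := hτ.trans_le hτa
  have hE : exp (-τ * x) ≤ 1 := exp_le_one_iff.2 (by nlinarith)
  have hcos : cos (τ * y) ≤ 0 :=
    nonpos_of_mul_nonpos_right (by nlinarith) (exp_pos (-τ * x))
  have hay : |a * y| ≤ 1 := (sq_le_one_iff_abs_le_one _).1 <| by
    nlinarith [sq_add_sq_eq_exp_sq_of_char_eq h1 h2, exp_pos (-τ * x)]
  have hty : |τ * y| ≤ 1 := calc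
    |τ * y| ≤ |a * y| := by
      rw [abs_mul, abs_mul, abs_of_pos hτ, abs_of_pos ha]
      gcongr
    _ ≤ 1 := hay
  exact (cos_pos_of_le_one hty).not_ge hcos

theorem stmt_8 (a τ x y : ℝ) (ha : 0 < a) (hτ : 0 < τ) (hτa : τ ≤ a)
    (h1 : Real.exp (-τ * x) * Real.cos (τ * y) + a * x = 0)
    (h2 : a * y - Real.exp (-τ * x) * Real.sin (τ * y) = 0) :
    x < 0 :=
  stmt_8_general a τ x y hτ hτa h1 h2
end

section
/- Let a, τ > 0 with τ ≤ a. Then every complex solution λ of aλ + e^{-λτ} = 0 satisfies Re(λ) < 0. -/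
/-!
If `Re λ ≥ 0`, then `|aλ| = e^{-τ Re λ} ≤ 1`, so `|τ Im λ| ≤ τ / a ≤ 1 < π / 2` and hence
`cos (τ Im λ) > 0`. The real part of the equation then reads
`a Re λ = -e^{-τ Re λ} cos (τ Im λ) < 0`, a contradiction.
-/

open Complex

lemma Real.cos_pos_of_abs_le_one {x : ℝ} (hx : |x| ≤ 1) : 0 < Real.cos x := by
  have hpi : 1 < Real.pi / 2 := by linarith [Real.pi_gt_three]
  exact Real.cos_pos_of_mem_Ioo ⟨by linarith [neg_abs_le x], by linarith [le_abs_self x]⟩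

lemma Complex.norm_exp_neg_mul_ofReal (lam : ℂ) (τ : ℝ) :
    ‖exp (-lam * τ)‖ = Real.exp (-(lam.re * τ)) := by
  simp [norm_exp]

lemma Complex.re_exp_neg_mul_ofReal (lam : ℂ) (τ : ℝ) :
    (exp (-lam * τ)).re = Real.exp (-(lam.re * τ)) * Real.cos (lam.im * τ) := by
  simp [exp_re, Real.cos_neg]

section DelayCharacteristicEquation

variable {a τ : ℝ} {lam : ℂ}

lemma mul_norm_le_one_of_characteristic_eq (ha : 0 < a) (hτ : 0 ≤ τ) (hre : 0 ≤ lam.re)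
    (heq : a * lam + exp (-lam * τ) = 0) : a * ‖lam‖ ≤ 1 := by
  have hnorm : a * ‖lam‖ = Real.exp (-(lam.re * τ)) := by
    rw [← norm_exp_neg_mul_ofReal, eq_neg_of_add_eq_zero_right heq, norm_neg, norm_mul,
      norm_real, Real.norm_of_nonneg ha.le]
  rw [hnorm, Real.exp_le_one_iff, neg_nonpos]
  exact mul_nonneg hre hτ

lemma abs_im_mul_le_one_of_mul_norm_le_one (hτ : 0 ≤ τ) (hτa : τ ≤ a)
    (hnorm : a * ‖lam‖ ≤ 1) : |lam.im * τ| ≤ 1 :=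
  calc |lam.im * τ| = |lam.im| * τ := by rw [abs_mul, abs_of_nonneg hτ]
    _ ≤ ‖lam‖ * a := mul_le_mul (abs_im_le_norm lam) hτa hτ (norm_nonneg lam)
    _ ≤ 1 := by linarith

lemma mul_re_of_characteristic_eq (heq : a * lam + exp (-lam * τ) = 0) :
    a * lam.re = -(Real.exp (-(lam.re * τ)) * Real.cos (lam.im * τ)) := by
  rw [← re_exp_neg_mul_ofReal, ← re_ofReal_mul, ← neg_re, ← eq_neg_of_add_eq_zero_left heq]

end DelayCharacteristicEquation

theorem stmt_9 (a τ : ℝ) (ha : 0 < a) (hτ : 0 < τ) (hτa : τ ≤ a)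
    (lam : ℂ) (heq : a * lam + Complex.exp (-lam * τ) = 0) :
    lam.re < 0 := by
  by_contra! hre
  have hnorm := mul_norm_le_one_of_characteristic_eq ha hτ.le hre heq
  have hcos : 0 < Real.cos (lam.im * τ) :=
    Real.cos_pos_of_abs_le_one (abs_im_mul_le_one_of_mul_norm_le_one hτ.le hτa hnorm)
  have hneg : a * lam.re < 0 := by
    rw [mul_re_of_characteristic_eq heq, neg_neg_iff_pos]
    positivity
  linarith [mul_nonneg ha.le hre]
end
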